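/- An ωPN has an infinite execution from m₀ if and only if it has a self-covering execution from m₀, i.e., a finite execution m₀ →t₁ m₁ →t₂ ⋯ →tₙ mₙ such that m_k ≼ mₙ for some k < n. -/

import Mathlib

/-- An ω-Petri net over a set of places `P`: a set `T` of transitions,
each with input and output valuations in ℕ ∪ {ω} (modelled as `WithTop ℕ`). -/
structure OmegaPN (P : Type) where
  T : Type
  I : T → P → WithTop ℕ
  O : T → P → WithTop ℕ

namespace OmegaPN

variable {P : Type}

/-- Concrete firing: `t` is firable from `m` (i.e. `m p ≥ I t p` whenever
`I t p ≠ ω`) and `m'` is obtained by consuming `i p` tokens (with `i p = I t p`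
if finite, an arbitrary value `≤ m p` if `I t p = ω`) and producing `o p` tokens
(with `o p = O t p` if finite, arbitrary if `O t p = ω`) in each place `p`. -/
def Fires (N : OmegaPN P) (t : N.T) (m m' : P → ℕ) : Prop :=
  ∃ i o : P → ℕ,
    (∀ p, N.I t p ≠ ⊤ → (i p : WithTop ℕ) = N.I t p) ∧
    (∀ p, N.O t p ≠ ⊤ → (o p : WithTop ℕ) = N.O t p) ∧
    (∀ p, i p ≤ m p) ∧
    (∀ p, m' p = m p - i p + o p)

/-- `m →σ m'` : firing the finite sequence `σ` of transitions from `m` can yield `m'`. -/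
inductive FiresSeq (N : OmegaPN P) : List N.T → (P → ℕ) → (P → ℕ) → Prop
  | nil (m : P → ℕ) : FiresSeq N [] m m
  | cons {t : N.T} {σ : List N.T} {m m₁ m₂ : P → ℕ} :
      N.Fires t m m₁ → FiresSeq N σ m₁ m₂ → FiresSeq N (t :: σ) m m₂

end OmegaPN

open OmegaPN

/-!
If the run `m₀ → m₁ → ⋯` is infinite, Dickson's lemma gives `k < n` with `mₖ ≼ mₙ`, so its prefix
of length `n` is self-covering. Conversely, by strong monotonicity a cycle `m →σ m'` with `m ≼ m'`
can be fired again from `m'`. Rotating such a cycle by one transition gives a cycle from the next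
marking, so the markings admitting a nonempty self-covering cycle are closed under some firing,
which yields an infinite run.
-/

namespace OmegaPN

variable {P : Type} {N : OmegaPN P}

def HasInfiniteExecution (N : OmegaPN P) (m₀ : P → ℕ) : Prop :=
  ∃ (ts : ℕ → N.T) (ms : ℕ → P → ℕ), ms 0 = m₀ ∧ ∀ n, N.Fires (ts n) (ms n) (ms (n + 1))

def HasSelfCoveringCycle (N : OmegaPN P) (m : P → ℕ) : Prop :=
  ∃ (σ : List N.T) (m' : P → ℕ), σ ≠ [] ∧ N.FiresSeq σ m m' ∧ m ≤ m'

/-- Strong monotonicity: the same choice of consumed and produced tokens stays valid. -/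
theorem Fires.add_right {t : N.T} {m m' : P → ℕ} (h : N.Fires t m m') (d : P → ℕ) :
    N.Fires t (m + d) (m' + d) := by
  obtain ⟨i, o, hi, ho, hle, heq⟩ := h
  refine ⟨i, o, hi, ho, fun p => (hle p).trans (Nat.le_add_right _ _), fun p => ?_⟩
  have := heq p
  have := hle p
  simp only [Pi.add_apply]
  omega

theorem FiresSeq.add_right {σ : List N.T} {m m' : P → ℕ} (h : N.FiresSeq σ m m') (d : P → ℕ) :
    N.FiresSeq σ (m + d) (m' + d) := by
  induction h with
  | nil m => exact .nil _
  | cons hf _ ih => exact .cons (hf.add_right d) ih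

theorem FiresSeq.append {σ τ : List N.T} {m₁ m₂ m₃ : P → ℕ}
    (h₁ : N.FiresSeq σ m₁ m₂) (h₂ : N.FiresSeq τ m₂ m₃) : N.FiresSeq (σ ++ τ) m₁ m₃ := by
  induction h₁ with
  | nil m => exact h₂
  | cons hf _ ih => exact .cons hf (ih h₂)

theorem FiresSeq.singleton {t : N.T} {m m' : P → ℕ} (h : N.Fires t m m') :
    N.FiresSeq [t] m m' :=
  .cons h (.nil _)

/-- Rotating the cycle `t :: σ` from `m` to `σ ++ [t]`, with `t` fired from `m' = m + (m' - m)`. -/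
theorem HasSelfCoveringCycle.exists_fires {m : P → ℕ} (h : N.HasSelfCoveringCycle m) :
    ∃ t m₁, N.Fires t m m₁ ∧ N.HasSelfCoveringCycle m₁ := by
  obtain ⟨_ | ⟨t, σ⟩, m', hne, hσ, hle⟩ := h
  · exact absurd rfl hne
  cases hσ with
  | @cons _ _ _ m₁ _ ht hσ =>
    have ht' := ht.add_right (m' - m)
    rw [add_tsub_cancel_of_le hle] at ht'
    exact ⟨t, m₁, ht, σ ++ [t], m₁ + (m' - m), by simp, hσ.append (.singleton ht'), le_self_add⟩

theorem hasInfiniteExecution_of_forall_exists_fires (S : Set (P → ℕ))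
    (hS : ∀ m ∈ S, ∃ t m₁, N.Fires t m m₁ ∧ m₁ ∈ S) {m₀ : P → ℕ} (h₀ : m₀ ∈ S) :
    N.HasInfiniteExecution m₀ := by
  choose t next hfires hnext using hS
  let step : S → S := fun m => ⟨next m m.2, hnext m m.2⟩
  let ms : ℕ → S := fun n => step^[n] ⟨m₀, h₀⟩
  refine ⟨fun n => t (ms n) (ms n).2, fun n => ms n, rfl, fun n => ?_⟩
  simpa only [ms, Function.iterate_succ_apply'] using hfires _ (ms n).2

theorem HasSelfCoveringCycle.hasInfiniteExecution {m : P → ℕ} (h : N.HasSelfCoveringCycle m) :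
    N.HasInfiniteExecution m :=
  hasInfiniteExecution_of_forall_exists_fires {m | N.HasSelfCoveringCycle m}
    (fun _ hm => hm.exists_fires) h

theorem HasInfiniteExecution.of_fires {t : N.T} {m₀ m : P → ℕ} (ht : N.Fires t m₀ m)
    (h : N.HasInfiniteExecution m) : N.HasInfiniteExecution m₀ := by
  obtain ⟨ts, ms, rfl, hstep⟩ := h
  refine ⟨fun n => n.casesOn t ts, fun n => n.casesOn m₀ ms, rfl, fun n => ?_⟩
  cases n with
  | zero => exact ht
  | succ n => exact hstep n

theorem HasInfiniteExecution.of_firesSeq {σ : List N.T} {m₀ m : P → ℕ}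
    (hσ : N.FiresSeq σ m₀ m) (h : N.HasInfiniteExecution m) : N.HasInfiniteExecution m₀ := by
  induction hσ with
  | nil => exact h
  | cons ht _ ih => exact (ih h).of_fires ht

theorem firesSeq_map_range' {ts : ℕ → N.T} {ms : ℕ → P → ℕ}
    (hstep : ∀ n, N.Fires (ts n) (ms n) (ms (n + 1))) (a len : ℕ) :
    N.FiresSeq ((List.range' a len).map ts) (ms a) (ms (a + len)) := by
  induction len generalizing a with
  | zero => exact .nil _
  | succ len ih =>
    rw [List.range'_succ, List.map_cons, show a + (len + 1) = a + 1 + len by omega]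
    exact .cons (hstep a) (ih (a + 1))

end OmegaPN

/-- An ωPN has an infinite execution from `m₀` iff it has a self-covering
execution from `m₀`: a finite execution `m₀ →σ₁ m_k →σ₂ m_n` with a nonempty
`σ₂` and `m_k ≼ m_n` componentwise. -/
theorem infinite_execution_iff_self_covering {P : Type} [Fintype P]
    (N : OmegaPN P) (m₀ : P → ℕ) :
    (∃ (ts : ℕ → N.T) (ms : ℕ → P → ℕ), ms 0 = m₀ ∧
        ∀ n : ℕ, N.Fires (ts n) (ms n) (ms (n + 1))) ↔
    (∃ (σ₁ σ₂ : List N.T) (mk mn : P → ℕ), σ₂ ≠ [] ∧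
        N.FiresSeq σ₁ m₀ mk ∧ N.FiresSeq σ₂ mk mn ∧ ∀ p, mk p ≤ mn p) := by
  constructor
  · rintro ⟨ts, ms, rfl, hstep⟩
    obtain ⟨k, n, hkn, hle⟩ := wellQuasiOrdered_le ms
    refine ⟨(List.range' 0 k).map ts, (List.range' k (n - k)).map ts, ms k, ms n,
      by simpa using Nat.sub_ne_zero_of_lt hkn, ?_, ?_, hle⟩
    · simpa using firesSeq_map_range' hstep 0 k
    · simpa [Nat.add_sub_cancel' hkn.le] using firesSeq_map_range' hstep k (n - k)
  · rintro ⟨σ₁, σ₂, mk, mn, hne, h₁, h₂, hle⟩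
    exact (HasSelfCoveringCycle.hasInfiniteExecution ⟨σ₂, mn, hne, h₂, hle⟩).of_firesSeq h₁
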